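/- Suppose the error dynamics have shape-preserving upper-bound structure: there exist positive semidefinite matrices W̄ ∈ ℝ^{d×d}, Σ̄ ∈ ℝ^{m×m}, scalars l, b > 0 and ρ ∈ [0,1) such that (i) Σ ⪯ l Σ̄, (ii) B Σ̄ Bᵀ ⪯ b W̄, and (iii) A W̄ Aᵀ ⪯ ρ² W̄, all in the Loewner order, and suppose A is Schur stable so that S_∞ = Σ_{s=0}^{∞} A^s B Σ Bᵀ (Aᵀ)^s exists. Define Ψ = b l / (1 − ρ²) and X̄ = C W̄ Cᵀ. Then X_∞ = C S_∞ Cᵀ satisfies X_∞ ⪯ Ψ · X̄, and consequently λ_max(X_∞) ≤ Ψ · λ_max(X̄). -/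

import Mathlib

/-!
In the Loewner order, `Σ ⪯ l Σ̄` and `B Σ̄ Bᵀ ⪯ b W̄` give `B Σ Bᵀ ⪯ b l W̄`, and iterating
`A W̄ Aᵀ ⪯ ρ² W̄` under the congruence `M ↦ A M Aᵀ` gives `A^s B Σ Bᵀ (Aᵀ)^s ⪯ b l ρ^{2s} W̄`.
Summing the geometric series bounds every partial sum of `S_∞` by `Ψ W̄`; the cone of positive
semidefinite matrices is closed, so the bound survives the limit, and congruence by `C` gives
`X_∞ ⪯ Ψ X̄`. Finally `X̄ ⪯ λ_max(X̄) I`, hence `X_∞ ⪯ Ψ λ_max(X̄) I`, which bounds every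
eigenvalue of `X_∞`.
-/

open Matrix Filter

open scoped MatrixOrder

namespace Matrix

section Loewner

variable {m n : Type*} [Fintype m] [Fintype n]

lemma mul_mul_transpose_le_mul_mul_transpose {P Q : Matrix n n ℝ} (h : P ≤ Q)
    (M : Matrix m n ℝ) : M * P * Mᵀ ≤ M * Q * Mᵀ := by
  rw [le_iff, ← Matrix.sub_mul, ← Matrix.mul_sub, ← conjTranspose_eq_transpose_of_trivial]
  exact (le_iff.mp h).mul_mul_conjTranspose_same M

lemma isClosed_setOf_posSemidef : IsClosed {M : Matrix n n ℝ | M.PosSemidef} := by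
  simp only [posSemidef_iff_dotProduct_mulVec, Set.ofPred_and, Set.ofPred_forall]
  refine .inter (isClosed_eq (by fun_prop) continuous_id) (isClosed_iInter fun x => ?_)
  exact isClosed_le continuous_const (by fun_prop)

lemma le_of_tendsto {ι : Type*} {l : Filter ι} [l.NeBot] {f : ι → Matrix n n ℝ}
    {L M : Matrix n n ℝ} (hf : Tendsto f l (nhds L)) (h : ∀ᶠ i in l, f i ≤ M) : L ≤ M :=
  (isClosed_setOf_posSemidef.preimage (continuous_const.sub continuous_id)).mem_of_tendsto hf h

variable [DecidableEq n]

lemma pow_mul_mul_transpose_pow_le {A W : Matrix n n ℝ} {r : ℝ} (hr : 0 ≤ r)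
    (hA : A * W * Aᵀ ≤ r • W) (s : ℕ) : A ^ s * W * Aᵀ ^ s ≤ r ^ s • W := by
  induction s with
  | zero => simp
  | succ s ih =>
    calc A ^ (s + 1) * W * Aᵀ ^ (s + 1) = A ^ s * (A * W * Aᵀ) * (A ^ s)ᵀ := by
          rw [pow_succ, pow_succ', transpose_pow]; noncomm_ring
      _ ≤ A ^ s * (r • W) * (A ^ s)ᵀ := mul_mul_transpose_le_mul_mul_transpose hA _
      _ = r • (A ^ s * W * Aᵀ ^ s) := by rw [transpose_pow, Matrix.mul_smul, Matrix.smul_mul]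
      _ ≤ r • (r ^ s • W) := smul_le_smul_of_nonneg_left ih hr
      _ = r ^ (s + 1) • W := by rw [smul_smul, pow_succ']

lemma sum_pow_mul_mul_transpose_pow_le {A W X : Matrix n n ℝ} {c r : ℝ} (hc : 0 ≤ c)
    (hr₀ : 0 ≤ r) (hr₁ : r < 1) (hW : W.PosSemidef) (hX : X ≤ c • W)
    (hA : A * W * Aᵀ ≤ r • W) (t : ℕ) :
    ∑ s ∈ Finset.range t, A ^ s * X * Aᵀ ^ s ≤ (c / (1 - r)) • W := by
  have hterm (s : ℕ) : A ^ s * X * Aᵀ ^ s ≤ (c * r ^ s) • W :=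
    calc A ^ s * X * Aᵀ ^ s ≤ A ^ s * (c • W) * (A ^ s)ᵀ := by
          rw [← transpose_pow]; exact mul_mul_transpose_le_mul_mul_transpose hX _
      _ = c • (A ^ s * W * Aᵀ ^ s) := by rw [transpose_pow, Matrix.mul_smul, Matrix.smul_mul]
      _ ≤ c • (r ^ s • W) :=
          smul_le_smul_of_nonneg_left (pow_mul_mul_transpose_pow_le hr₀ hA s) hc
      _ = (c * r ^ s) • W := smul_smul _ _ _
  have hgeom : ∑ s ∈ Finset.range t, c * r ^ s ≤ c / (1 - r) := by
    rw [← Finset.mul_sum, div_eq_mul_one_div, ← pow_zero r, Finset.range_eq_Ico]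
    exact mul_le_mul_of_nonneg_left (geom_sum_Ico_le_of_lt_one hr₀ hr₁) hc
  calc ∑ s ∈ Finset.range t, A ^ s * X * Aᵀ ^ s ≤ ∑ s ∈ Finset.range t, (c * r ^ s) • W :=
        Finset.sum_le_sum fun s _ => hterm s
    _ = (∑ s ∈ Finset.range t, c * r ^ s) • W := (Finset.sum_smul ..).symm
    _ ≤ (c / (1 - r)) • W := smul_le_smul_of_nonneg_right hgeom hW.nonneg

end Loewner

section Eigenvalues

variable {n 𝕜 : Type*} [Fintype n] [DecidableEq n] [RCLike 𝕜]

lemma IsHermitian.le_smul_one_iff {A : Matrix n n 𝕜} (hA : A.IsHermitian) {r : ℝ} :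
    A ≤ r • (1 : Matrix n n 𝕜) ↔ ∀ i, hA.eigenvalues i ≤ r := by
  rw [← Algebra.algebraMap_eq_smul_one, le_algebraMap_iff_spectrum_le hA.isSelfAdjoint,
    hA.spectrum_real_eq_range_eigenvalues, Set.forall_mem_range]

lemma IsHermitian.eigenvalues_le_mul_of_le_smul {X Y : Matrix n n 𝕜} (hX : X.IsHermitian)
    (hY : Y.IsHermitian) {c μ : ℝ} (hc : 0 ≤ c) (hXY : X ≤ c • Y)
    (hμ : ∀ j, hY.eigenvalues j ≤ μ) (i : n) : hX.eigenvalues i ≤ c * μ := by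
  refine hX.le_smul_one_iff.mp (hXY.trans ?_) i
  calc c • Y ≤ c • (μ • (1 : Matrix n n 𝕜)) :=
        smul_le_smul_of_nonneg_left (hY.le_smul_one_iff.mpr hμ) hc
    _ = (c * μ) • (1 : Matrix n n 𝕜) := smul_smul _ _ _

end Eigenvalues

end Matrix

theorem scalar_ordering_reduction_general
    {d m n : ℕ}
    (A : Matrix (Fin d) (Fin d) ℝ) (B : Matrix (Fin d) (Fin m) ℝ)
    (C : Matrix (Fin n) (Fin d) ℝ)
    (Sg : Matrix (Fin m) (Fin m) ℝ)
    (Wbar : Matrix (Fin d) (Fin d) ℝ) (hWbar : Wbar.PosSemidef)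
    (Sbar : Matrix (Fin m) (Fin m) ℝ)
    (l b : ℝ) (hl : 0 < l) (hb : 0 < b)
    (ρ : ℝ) (hρ0 : 0 ≤ ρ) (hρ1 : ρ < 1)
    (hlabel : (l • Sbar - Sg).PosSemidef)
    (hinj : (b • Wbar - B * Sbar * Bᵀ).PosSemidef)
    (hcontr : (ρ ^ 2 • Wbar - A * Wbar * Aᵀ).PosSemidef)
    (Sinf : Matrix (Fin d) (Fin d) ℝ)
    (hSinf : Tendsto (fun t => ∑ s ∈ Finset.range t, A ^ s * (B * Sg * Bᵀ) * (Aᵀ) ^ s)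
      atTop (nhds Sinf))
    (hXinf : (C * Sinf * Cᵀ).IsHermitian)
    (hXbar : (C * Wbar * Cᵀ).IsHermitian)
    (lmaxXinf lmaxXbar : ℝ)
    (hlXinf : IsGreatest (Set.range hXinf.eigenvalues) lmaxXinf)
    (hlXbar : IsGreatest (Set.range hXbar.eigenvalues) lmaxXbar) :
    ((b * l / (1 - ρ ^ 2)) • (C * Wbar * Cᵀ) - C * Sinf * Cᵀ).PosSemidef ∧
      lmaxXinf ≤ (b * l / (1 - ρ ^ 2)) * lmaxXbar := by
  have hρ : ρ ^ 2 < 1 := by nlinarith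
  have hΨ : 0 ≤ b * l / (1 - ρ ^ 2) := div_nonneg (by positivity) (by linarith)
  have hnoise : B * Sg * Bᵀ ≤ (b * l) • Wbar :=
    calc B * Sg * Bᵀ ≤ B * (l • Sbar) * Bᵀ := mul_mul_transpose_le_mul_mul_transpose hlabel B
      _ = l • (B * Sbar * Bᵀ) := by rw [Matrix.mul_smul, Matrix.smul_mul]
      _ ≤ l • (b • Wbar) := smul_le_smul_of_nonneg_left hinj hl.le
      _ = (b * l) • Wbar := by rw [smul_smul, mul_comm]
  have hS : Sinf ≤ (b * l / (1 - ρ ^ 2)) • Wbar :=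
    le_of_tendsto hSinf <| .of_forall <| sum_pow_mul_mul_transpose_pow_le (by positivity)
      (sq_nonneg ρ) hρ hWbar hnoise hcontr
  have hX : C * Sinf * Cᵀ ≤ (b * l / (1 - ρ ^ 2)) • (C * Wbar * Cᵀ) := by
    simpa only [Matrix.mul_smul, Matrix.smul_mul] using
      mul_mul_transpose_le_mul_mul_transpose hS C
  refine ⟨hX, ?_⟩
  obtain ⟨i, rfl⟩ := hlXinf.1
  exact hXinf.eigenvalues_le_mul_of_le_smul hXbar hΨ hX (fun j => hlXbar.2 ⟨j, rfl⟩) i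

/-- **Scalar ordering reduction.**
Under the shape-preserving upper-bound structure `Σ ⪯ l Σ̄`, `B Σ̄ Bᵀ ⪯ b W̄`,
`A W̄ Aᵀ ⪯ ρ² W̄` with `l, b > 0`, `ρ ∈ [0,1)`, and Schur-stable `A`, the stationary
proxy `X_∞ = C S_∞ Cᵀ` (with `S_∞ = lim_t ∑_{s<t} A^s B Σ Bᵀ (Aᵀ)^s`) satisfies
`X_∞ ⪯ Ψ X̄` where `Ψ = b l / (1 − ρ²)` and `X̄ = C W̄ Cᵀ`; consequently
`λ_max(X_∞) ≤ Ψ λ_max(X̄)`. -/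
theorem scalar_ordering_reduction
    {d m n : ℕ}
    (A : Matrix (Fin d) (Fin d) ℝ) (B : Matrix (Fin d) (Fin m) ℝ)
    (C : Matrix (Fin n) (Fin d) ℝ)
    (Sg : Matrix (Fin m) (Fin m) ℝ) (hSg : Sg.PosSemidef)
    (hA : ∀ z ∈ spectrum ℂ (A.map (algebraMap ℝ ℂ)), ‖z‖ < 1)
    (Wbar : Matrix (Fin d) (Fin d) ℝ) (hWbar : Wbar.PosSemidef)
    (Sbar : Matrix (Fin m) (Fin m) ℝ) (hSbar : Sbar.PosSemidef)
    (l b : ℝ) (hl : 0 < l) (hb : 0 < b)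
    (ρ : ℝ) (hρ0 : 0 ≤ ρ) (hρ1 : ρ < 1)
    (hlabel : (l • Sbar - Sg).PosSemidef)
    (hinj : (b • Wbar - B * Sbar * Bᵀ).PosSemidef)
    (hcontr : (ρ ^ 2 • Wbar - A * Wbar * Aᵀ).PosSemidef)
    (Sinf : Matrix (Fin d) (Fin d) ℝ)
    (hSinf : Tendsto (fun t => ∑ s ∈ Finset.range t, A ^ s * (B * Sg * Bᵀ) * (Aᵀ) ^ s)
      atTop (nhds Sinf))
    (hXinf : (C * Sinf * Cᵀ).IsHermitian)
    (hXbar : (C * Wbar * Cᵀ).IsHermitian)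
    (lmaxXinf lmaxXbar : ℝ)
    (hlXinf : IsGreatest (Set.range hXinf.eigenvalues) lmaxXinf)
    (hlXbar : IsGreatest (Set.range hXbar.eigenvalues) lmaxXbar) :
    ((b * l / (1 - ρ ^ 2)) • (C * Wbar * Cᵀ) - C * Sinf * Cᵀ).PosSemidef ∧
      lmaxXinf ≤ (b * l / (1 - ρ ^ 2)) * lmaxXbar :=
  scalar_ordering_reduction_general A B C Sg Wbar hWbar Sbar l b hl hb ρ hρ0 hρ1 hlabel hinj hcontr
    Sinf hSinf hXinf hXbar lmaxXinf lmaxXbar hlXinf hlXbar
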